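/- For every even integer q ≥ 2, with I_k = k!/(2^{k/2} (k/2)!) for even k, define N_q = Σ_{j=1}^{q/2} Σ_{0=k_0<k_1<⋯<k_j=q, all k_i even} C(q,k_1) C(q−k_1, q−k_2) ⋯ C(q−k_{j−1}, q−k_j) · I_{k_1} I_{k_2−k_1} ⋯ I_{k_j−k_{j−1}} · (−1)^{j+1}. Then N_q = (−1)^{q/2+1} I_q. -/

import Mathlib

/-!
Write the paper's chains in complemented coordinates `c = q - k`, i.e. as even chains
`q = c 0 > c 1 > ⋯ > c j = 0` with step weights `C(a, b) I_{a-b}`. Removing the first step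
`q → 2m` leaves a chain of the same kind from `2m`, so for `q = 2n`
`N_{2n} = I_{2n} - ∑_{0<m<n} C(2n, 2m) I_{2n-2m} N_{2m}`.
Since `C(2n, 2m) I_{2n-2m} I_{2m} = C(n, m) I_{2n}`, strong induction reduces the claim to the
alternating binomial sum `∑_{0<m<n} (-1)^(m+1) C(n, m) = 1 + (-1)^n`.
-/

open Finset

/-- `pairCount k = k! / (2^(k/2) (k/2)!)`, the number of partitions of a set of `k`
elements into `k/2` pairs (for `k` even). -/
noncomputable def pairCount (k : ℕ) : ℚ :=
  (Nat.factorial k : ℚ) / (2 ^ (k / 2) * Nat.factorial (k / 2))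

def evenChains (q j : ℕ) : Finset (Fin (j + 1) → ℕ) :=
  (Fintype.piFinset fun _ => range (q + 1)).filter fun c =>
    c 0 = q ∧ c (Fin.last j) = 0 ∧ (∀ s : Fin j, c s.succ < c s.castSucc) ∧ ∀ s, Even (c s)

theorem mem_evenChains {q j : ℕ} {c : Fin (j + 1) → ℕ} :
    c ∈ evenChains q j ↔
      c 0 = q ∧ c (Fin.last j) = 0 ∧ (∀ s : Fin j, c s.succ < c s.castSucc) ∧
        ∀ s, Even (c s) := by
  rw [evenChains, mem_filter, Fintype.mem_piFinset, and_iff_right_iff_imp]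
  rintro ⟨rfl, -, hstep, -⟩ s
  exact mem_range_succ_iff.2 ((Fin.strictAnti_iff_succ_lt.2 hstep).antitone (Fin.zero_le s))

theorem le_of_mem_evenChains {q j : ℕ} {c : Fin (j + 1) → ℕ} (hc : c ∈ evenChains q j)
    (s : Fin (j + 1)) : c s ≤ q :=
  mem_range_succ_iff.1 (Fintype.mem_piFinset.1 (mem_filter.1 hc).1 s)

open scoped Classical in
theorem sum_strictMono_chains_eq_sum_evenChains {M : Type*} [AddCommMonoid M] {q : ℕ}
    (hq : Even q) (j : ℕ) (f : (Fin (j + 1) → ℕ) → M) :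
    ∑ k ∈ univ.filter (fun k : Fin (j + 1) → Fin (q + 1) =>
        (k 0 : ℕ) = 0 ∧ (k (Fin.last j) : ℕ) = q ∧ StrictMono k ∧ ∀ s, Even (k s : ℕ)),
      f (fun s => q - k s) = ∑ c ∈ evenChains q j, f c := by
  refine sum_nbij' (fun k s => q - k s) (fun c s => ⟨q - c s, by omega⟩) ?_ ?_ ?_ ?_ ?_
  · intro k hk
    obtain ⟨h0, hlast, hmono, heven⟩ := (mem_filter.1 hk).2
    refine mem_evenChains.2 ⟨by simp [h0], by simp [hlast], fun s => ?_, fun s => hq.tsub (heven s)⟩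
    have := Fin.strictMono_iff_lt_succ.1 hmono s
    have := (k s.succ).isLt
    simp only [Fin.lt_def] at *
    omega
  · intro c hc
    have hle := le_of_mem_evenChains hc
    obtain ⟨h0, hlast, hstep, heven⟩ := mem_evenChains.1 hc
    refine mem_filter.2 ⟨mem_univ _, by simp [h0], by simp [hlast],
      Fin.strictMono_iff_lt_succ.2 fun s => ?_, fun s => hq.tsub (heven s)⟩
    have := hstep s
    have := hle s.castSucc
    rw [Fin.lt_def]
    dsimp only
    omega
  · intro k _
    funext s
    have := (k s).isLt
    ext
    dsimp only
    omega
  · intro c hc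
    funext s
    have := le_of_mem_evenChains hc s
    dsimp only
    omega
  · intro k _
    rfl

theorem cons_mem_evenChains_succ {q j a : ℕ} {c : Fin (j + 1) → ℕ} :
    (Fin.cons a c : Fin (j + 2) → ℕ) ∈ evenChains q (j + 1) ↔
      a = q ∧ Even q ∧ c 0 < q ∧ c ∈ evenChains (c 0) j := by
  simp only [mem_evenChains, Fin.forall_fin_succ, Fin.cons_zero, Fin.cons_succ, ← Fin.succ_last,
    Fin.castSucc_zero, ← Fin.succ_castSucc, true_and]
  constructor
  · rintro ⟨rfl, hlast, ⟨h0, hstep⟩, ha, hc0, hc⟩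
    exact ⟨rfl, ha, h0, hlast, hstep, hc0, hc⟩
  · rintro ⟨rfl, hq, h0, hlast, hstep, hc0, hc⟩
    exact ⟨rfl, hlast, ⟨h0, hstep⟩, hq, hc0, hc⟩

theorem sum_evenChains_succ {M : Type*} [AddCommMonoid M] {q : ℕ} (hq : Even q) (j : ℕ)
    (f : (Fin (j + 2) → ℕ) → M) :
    ∑ c ∈ evenChains q (j + 1), f c =
      ∑ m ∈ range (q / 2), ∑ c ∈ evenChains (2 * m) j, f (Fin.cons q c) := by
  have cons_tail {c} (hc : c ∈ evenChains q (j + 1)) : Fin.cons q (Fin.tail c) = c := by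
    rw [← (mem_evenChains.1 hc).1]
    exact Fin.cons_self_tail c
  rw [sum_sigma']
  refine sum_nbij' (fun c => (⟨c 1 / 2, Fin.tail c⟩ : (_ : ℕ) × (Fin (j + 1) → ℕ)))
    (fun x => (Fin.cons q x.2 : Fin (j + 2) → ℕ)) ?_ ?_ ?_ ?_ ?_
  · intro c hc
    rw [← cons_tail hc, cons_mem_evenChains_succ] at hc
    obtain ⟨-, -, hlt, hc⟩ := hc
    obtain ⟨r, hr⟩ := (mem_evenChains.1 hc).2.2.2 0
    have h1 : Fin.tail c 0 = c 1 := rfl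
    obtain ⟨t, ht⟩ := hq
    refine mem_sigma.2 ⟨mem_range.2 (show c 1 / 2 < q / 2 by omega), ?_⟩
    rwa [show 2 * (c 1 / 2) = Fin.tail c 0 by omega]
  · rintro ⟨m, c⟩ hc
    rw [mem_sigma, mem_range] at hc
    rw [cons_mem_evenChains_succ, (mem_evenChains.1 hc.2).1]
    exact ⟨rfl, hq, by omega, hc.2⟩
  · intro c hc
    exact cons_tail hc
  · rintro ⟨m, c⟩ hc
    have h0 := (mem_evenChains.1 (mem_sigma.1 hc).2).1
    simp only [Fin.cons_one, Fin.tail_cons] at h0 ⊢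
    rw [h0, Nat.mul_div_cancel_left m two_pos]
  · intro c hc
    rw [cons_tail hc]

theorem evenChains_eq_empty {q j : ℕ} (h : q < 2 * j) : evenChains q j = ∅ := by
  refine eq_empty_of_forall_notMem fun c hc => ?_
  obtain ⟨h0, hlast, hstep, heven⟩ := mem_evenChains.1 hc
  have key : ∀ s : Fin (j + 1), 2 * (s : ℕ) + c s ≤ q := by
    intro s
    induction s using Fin.induction with
    | zero => simp [h0]
    | succ s ih =>
      obtain ⟨a, ha⟩ := heven s.castSucc
      obtain ⟨b, hb⟩ := heven s.succ
      have := hstep s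
      simp only [Fin.val_castSucc, Fin.val_succ] at ih ⊢
      omega
  have := key (Fin.last j)
  simp only [Fin.val_last, hlast] at this
  omega

theorem evenChains_zero_right (q : ℕ) : evenChains q 0 = if q = 0 then {0} else ∅ := by
  ext c
  rw [mem_evenChains, Fin.last_zero]
  split_ifs with hq
  · subst hq
    simp +contextual [funext_iff, Fin.forall_fin_one]
  · simp only [notMem_empty, iff_false]
    omega

section

variable {R : Type*} [CommRing R]

def chainWeight (w : ℕ → ℕ → R) {j : ℕ} (c : Fin (j + 1) → ℕ) : R :=
  ∏ s : Fin j, w (c s.castSucc) (c s.succ)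

def chainSum (w : ℕ → ℕ → R) (q j : ℕ) : R :=
  ∑ c ∈ evenChains q j, chainWeight w c

def altChainSum (w : ℕ → ℕ → R) (q : ℕ) : R :=
  ∑ j ∈ Icc 1 (q / 2), ∑ c ∈ evenChains q j, (-1) ^ (j + 1) * chainWeight w c

theorem chainWeight_cons (w : ℕ → ℕ → R) (a : ℕ) {j : ℕ} (c : Fin (j + 1) → ℕ) :
    chainWeight w (Fin.cons a c : Fin (j + 2) → ℕ) = w a (c 0) * chainWeight w c := by
  simp [chainWeight, Fin.prod_univ_succ]

theorem chainSum_zero_right (w : ℕ → ℕ → R) (q : ℕ) :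
    chainSum w q 0 = if q = 0 then 1 else 0 := by
  rw [chainSum, evenChains_zero_right]
  split_ifs <;> simp [chainWeight]

theorem chainSum_succ (w : ℕ → ℕ → R) {q : ℕ} (hq : Even q) (j : ℕ) :
    chainSum w q (j + 1) = ∑ m ∈ range (q / 2), w q (2 * m) * chainSum w (2 * m) j := by
  rw [chainSum, sum_evenChains_succ hq]
  refine sum_congr rfl fun m _ => ?_
  rw [chainSum, mul_sum]
  refine sum_congr rfl fun c hc => ?_
  rw [chainWeight_cons, (mem_evenChains.1 hc).1]

theorem altChainSum_eq_sum_range (w : ℕ → ℕ → R) {q N : ℕ} (hN : q / 2 ≤ N) :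
    altChainSum w q = ∑ i ∈ range N, (-1) ^ i * chainSum w q (i + 1) := by
  have hq : altChainSum w q = ∑ i ∈ range (q / 2), (-1) ^ i * chainSum w q (i + 1) := by
    rw [altChainSum, ← Ico_add_one_right_eq_Icc, sum_Ico_eq_sum_range, Nat.add_sub_cancel]
    refine sum_congr rfl fun i _ => ?_
    rw [chainSum, mul_sum, add_comm 1 i, pow_succ, pow_succ]
    simp
  rw [hq]
  refine sum_subset (range_subset_range.2 hN) fun i _ hi => ?_
  rw [mem_range, not_lt] at hi
  rw [chainSum, evenChains_eq_empty (by omega), sum_empty, mul_zero]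

theorem altChainSum_eq (w : ℕ → ℕ → R) {q : ℕ} (hq : Even q) (hq0 : q ≠ 0) :
    altChainSum w q = w q 0 - ∑ m ∈ range (q / 2), w q (2 * m) * altChainSum w (2 * m) := by
  obtain ⟨N, hN⟩ : ∃ N, q / 2 = N + 1 := ⟨q / 2 - 1, by obtain ⟨t, ht⟩ := hq; omega⟩
  have inner : ∀ m ∈ range (q / 2), ∑ i ∈ range (q / 2), (-1) ^ i * chainSum w (2 * m) i =
      (if m = 0 then 1 else 0) - altChainSum w (2 * m) := by
    intro m hm
    rw [mem_range] at hm
    rw [hN, sum_range_succ', altChainSum_eq_sum_range w (N := N) (by omega), chainSum_zero_right]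
    simp [pow_succ, sub_eq_neg_add]
  calc altChainSum w q
      = ∑ i ∈ range (q / 2), (-1) ^ i * chainSum w q (i + 1) :=
        altChainSum_eq_sum_range w le_rfl
    _ = ∑ m ∈ range (q / 2),
          w q (2 * m) * ∑ i ∈ range (q / 2), (-1) ^ i * chainSum w (2 * m) i := by
        simp only [chainSum_succ w hq, mul_sum]
        rw [sum_comm]
        simp only [mul_left_comm]
    _ = w q 0 - ∑ m ∈ range (q / 2), w q (2 * m) * altChainSum w (2 * m) := by
        rw [sum_congr rfl fun m hm => congrArg _ (inner m hm)]
        simp [mul_sub, sum_sub_distrib, hN]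

end

theorem sum_range_neg_one_pow_mul_choose_succ {R : Type*} [Ring R] (N : ℕ) :
    ∑ m ∈ range N, (-1) ^ m * ((N + 1).choose (m + 1) : R) = 1 - (-1) ^ N := by
  have h := Int.alternating_sum_range_choose_eq_choose (n := N) (m := N)
  rw [sum_range_succ', Nat.choose_self] at h
  have h' : ∑ m ∈ range N, (-1) ^ m * ((N + 1).choose (m + 1) : ℤ) = 1 - (-1) ^ N := by
    simp only [pow_succ, mul_neg_one, neg_mul, sum_neg_distrib, pow_zero, Nat.choose_zero_right,
      Nat.cast_one, mul_one] at h
    linarith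
  exact_mod_cast congrArg (Int.cast : ℤ → R) h'

theorem pairCount_two_mul (n : ℕ) :
    pairCount (2 * n) = (2 * n).factorial / (2 ^ n * n.factorial : ℚ) := by
  simp [pairCount]

theorem choose_mul_pairCount_mul_pairCount {m n : ℕ} (h : m ≤ n) :
    ((2 * n).choose (2 * m) : ℚ) * pairCount (2 * n - 2 * m) * pairCount (2 * m) =
      n.choose m * pairCount (2 * n) := by
  obtain ⟨k, rfl⟩ := Nat.exists_eq_add_of_le h
  rw [show 2 * (m + k) - 2 * m = 2 * k by omega, pairCount_two_mul, pairCount_two_mul,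
    pairCount_two_mul, Nat.cast_choose ℚ (by omega : 2 * m ≤ 2 * (m + k)),
    Nat.cast_choose ℚ h, show 2 * (m + k) - 2 * m = 2 * k by omega, Nat.add_sub_cancel_left]
  field_simp
  ring

noncomputable def pairingWeight (a b : ℕ) : ℚ :=
  a.choose b * pairCount (a - b)

theorem altChainSum_pairingWeight {n : ℕ} (hn : n ≠ 0) :
    altChainSum pairingWeight (2 * n) = (-1) ^ (n + 1) * pairCount (2 * n) := by
  induction n using Nat.strong_induction_on with | _ n ih =>
  obtain ⟨N, rfl⟩ := Nat.exists_eq_succ_of_ne_zero hn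
  have step : ∀ m ∈ range N,
      pairingWeight (2 * (N + 1)) (2 * (m + 1)) * altChainSum pairingWeight (2 * (m + 1)) =
        (-1) ^ m * ((N + 1).choose (m + 1) : ℚ) * pairCount (2 * (N + 1)) := by
    intro m hm
    rw [mem_range] at hm
    rw [ih (m + 1) (by omega) (by omega), pairingWeight]
    linear_combination (-1) ^ m * choose_mul_pairCount_mul_pairCount (by omega : m + 1 ≤ N + 1)
  rw [altChainSum_eq _ (even_two_mul _) (by omega), Nat.mul_div_cancel_left _ two_pos,
    sum_range_succ', sum_congr rfl step, ← sum_mul, sum_range_neg_one_pow_mul_choose_succ]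
  simp [pairingWeight, altChainSum]
  ring

open scoped Classical in
theorem stmt0 (q : ℕ) (hq2 : 2 ≤ q) (hqe : Even q) :
    ∑ j ∈ Finset.Icc 1 (q / 2),
      ∑ k ∈ Finset.univ.filter
          (fun k : Fin (j + 1) → Fin (q + 1) =>
            (k 0 : ℕ) = 0 ∧ (k (Fin.last j) : ℕ) = q ∧ StrictMono k ∧
              ∀ s, Even (k s : ℕ)),
        (-1 : ℚ) ^ (j + 1) *
          ∏ s : Fin j,
            (Nat.choose (q - (k s.castSucc : ℕ)) (q - (k s.succ : ℕ)) : ℚ) *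
              pairCount ((k s.succ : ℕ) - (k s.castSucc : ℕ))
      = (-1 : ℚ) ^ (q / 2 + 1) * pairCount q := by
  have hq : altChainSum pairingWeight q = (-1) ^ (q / 2 + 1) * pairCount q := by
    obtain ⟨n, rfl⟩ := hqe.two_dvd
    rw [altChainSum_pairingWeight (by omega), Nat.mul_div_cancel_left _ two_pos]
  rw [← hq, altChainSum]
  refine sum_congr rfl fun j _ => ?_
  rw [← sum_strictMono_chains_eq_sum_evenChains hqe]
  refine sum_congr rfl fun k _ => ?_
  simp only [chainWeight, pairingWeight]
  congr
  funext s
  congr 2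
  -- `(q - a) - (q - b) = b - a` for `a, b ≤ q`, both sides truncating to `0` when `b < a`
  have := (k s.castSucc).isLt
  omega
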